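/- Let N ≥ 3 and let m be a continuous bounded function on ℝ^N with m(x) ≥ 0 everywhere, m(0) > 0, and with existing positive limit m(∞) = lim_{|x|→∞} m(x) > 0. Assume there exists a ball B(x_M, r) such that m(x) ≥ m(x_M) > 0 for all x ∈ B(x_M, r) and 0 ∉ closure(B(x_M, r)). If both m(0)/m(x_M) < r²(N−2)² / (2(r+|x_M|)²(N+1)(N+2)) and m(∞)/m(x_M) < r²(N−2)² / (2(r+|x_M|)²(N+1)(N+2)), then Λ_m < Λ_N · min(1/m(0), 1/m(∞)). -/

import Mathlib

open MeasureTheory Filter Metric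
open scoped Topology ENNReal NNReal

noncomputable section

/-- `ℝ^N` as a Euclidean space. -/
abbrev Euc (N : ℕ) : Type := EuclideanSpace ℝ (Fin N)

/-- The Dirichlet energy `∫_{ℝ^N} |∇u|² dx`. -/
def dirichlet (N : ℕ) (u : Euc N → ℝ) : ℝ := ∫ x : Euc N, ‖gradient u x‖ ^ 2

/-- The Hardy-type potential integral `∫_{ℝ^N} m(x) u(x)² / |x|² dx`. -/
def hardyInt (N : ℕ) (m u : Euc N → ℝ) : ℝ := ∫ x : Euc N, m x * u x ^ 2 / ‖x‖ ^ 2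

/-- The critical Sobolev exponent `2* = 2N/(N-2)`. -/
def critExp (N : ℕ) : ℝ := 2 * (N : ℝ) / ((N : ℝ) - 2)

/-- The optimal Hardy constant `Λ_N = ((N-2)/2)²`. -/
def hardyConst (N : ℕ) : ℝ := (((N : ℝ) - 2) / 2) ^ 2

/-- Membership in `D^{1,2}(ℝ^N)`, realized as the functions in `L^{2*}(ℝ^N)`
whose gradient is square integrable. -/
def MemD12 (N : ℕ) (u : Euc N → ℝ) : Prop :=
  MemLp u (ENNReal.ofReal (critExp N)) volume ∧
    Integrable (fun x : Euc N => ‖gradient u x‖ ^ 2) volume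

/-- The set of Rayleigh quotients defining `Λ_m`. -/
def rayleighSet (N : ℕ) (m : Euc N → ℝ) : Set ℝ :=
  { r | ∃ u : Euc N → ℝ, MemD12 N u ∧ u ≠ 0 ∧ 0 < hardyInt N m u ∧
      r = dirichlet N u / hardyInt N m u }

/-- `Λ_m`, the infimum of the Rayleigh quotients. -/
def Lambda (N : ℕ) (m : Euc N → ℝ) : ℝ := sInf (rayleighSet N m)

/-- A minimizer for `Λ_m`. -/
def IsMinimizer (N : ℕ) (m u : Euc N → ℝ) : Prop :=
  MemD12 N u ∧ u ≠ 0 ∧ 0 < hardyInt N m u ∧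
    dirichlet N u / hardyInt N m u = Lambda N m

/-- `∫_{ℝ^N} V u² dx`. -/
def potInt (N : ℕ) (V u : Euc N → ℝ) : ℝ := ∫ x : Euc N, V x * u x ^ 2

/-- `Λ_V = inf { ∫ |∇u|² : u ∈ D^{1,2}, ∫ V u² = 1 }`. -/
def lambdaV (N : ℕ) (V : Euc N → ℝ) : ℝ :=
  sInf { r | ∃ u : Euc N → ℝ, MemD12 N u ∧ potInt N V u = 1 ∧ r = dirichlet N u }

/-- Membership in the weak Lorentz space `L^{p,∞}(ℝ^N)`, via the distribution function. -/
def MemWeakLp (N : ℕ) (p : ℝ) (V : Euc N → ℝ) : Prop :=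
  Measurable V ∧ ∃ C : ℝ, 0 ≤ C ∧ ∀ s : ℝ, 0 < s →
    volume { x : Euc N | s < |V x| } ≤ ENNReal.ofReal (C / s ^ p)

/-- `V` is positive on a set of positive measure. -/
def PosOnPosMeasure (N : ℕ) (V : Euc N → ℝ) : Prop :=
  0 < volume { x : Euc N | 0 < V x }

/-- Weak convergence of a sequence in `D^{1,2}(ℝ^N)`. -/
def TendstoWeaklyD12 (N : ℕ) (u : ℕ → Euc N → ℝ) (w : Euc N → ℝ) : Prop :=
  (∀ k, MemD12 N (u k)) ∧ MemD12 N w ∧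
    ∀ φ : Euc N → ℝ, MemD12 N φ →
      Tendsto (fun k => ∫ x : Euc N, (inner ℝ (gradient (u k) x) (gradient φ x) : ℝ)) atTop
        (nhds (∫ x : Euc N, (inner ℝ (gradient w x) (gradient φ x) : ℝ)))

/-- (Sequential) weak continuity of a functional on `D^{1,2}(ℝ^N)`. -/
def WeaklyContinuousD12 (N : ℕ) (G : (Euc N → ℝ) → ℝ) : Prop :=
  ∀ (u : ℕ → Euc N → ℝ) (w : Euc N → ℝ), TendstoWeaklyD12 N u w →
    Tendsto (fun k => G (u k)) atTop (nhds (G w))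

/-- The quadratic form `Q(u) = ∫ (|∇u|² - c V u²) dx`. -/
def Qform (N : ℕ) (c : ℝ) (V u : Euc N → ℝ) : ℝ :=
  ∫ x : Euc N, (‖gradient u x‖ ^ 2 - c * V x * u x ^ 2)

/-- A test function in `C_c^∞(Ω)`. -/
def TestOn (N : ℕ) (Ω : Set (Euc N)) (φ : Euc N → ℝ) : Prop :=
  ContDiff ℝ (⊤ : ℕ∞) φ ∧ HasCompactSupport φ ∧ tsupport φ ⊆ Ω

/-- A null sequence for the quadratic form `Q(u) = ∫ (|∇u|² - c V u²)` on `C_c^∞(Ω)`: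
nonnegative test functions `v k` with `Q(v k) → 0` and `∫ ψ v k = 1` for some
fixed nonnegative test function `ψ`. -/
def NullSeqOn (N : ℕ) (Ω : Set (Euc N)) (c : ℝ) (V : Euc N → ℝ) (v : ℕ → Euc N → ℝ) : Prop :=
  (∀ k, TestOn N Ω (v k) ∧ ∀ x, 0 ≤ v k x) ∧
  (∃ ψ : Euc N → ℝ, TestOn N Ω ψ ∧ (∀ x, 0 ≤ ψ x) ∧ ∀ k, ∫ x : Euc N, ψ x * v k x = 1) ∧
  Tendsto (fun k => Qform N c V (v k)) atTop (nhds 0)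

/-- `u` is a weak solution of `-Δu = c V u` in `Ω`, tested against `C_c^∞(Ω)`. -/
def WeakSolutionOn (N : ℕ) (Ω : Set (Euc N)) (c : ℝ) (V u : Euc N → ℝ) : Prop :=
  ∀ φ : Euc N → ℝ, TestOn N Ω φ →
    ∫ x : Euc N, (inner ℝ (gradient u x) (gradient φ x) : ℝ) = c * ∫ x : Euc N, V x * u x * φ x

/-- Weak convergence in `H¹_loc(ℝ^N)`, tested against smooth compactly supported functions. -/
def ConvergesLocallyWeakly (N : ℕ) (v : ℕ → Euc N → ℝ) (w : Euc N → ℝ) : Prop :=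
  ∀ φ : Euc N → ℝ, ContDiff ℝ (⊤ : ℕ∞) φ → HasCompactSupport φ →
    Tendsto (fun k => ∫ x : Euc N, v k x * φ x) atTop (nhds (∫ x : Euc N, w x * φ x)) ∧
    Tendsto (fun k => ∫ x : Euc N, (inner ℝ (gradient (v k) x) (gradient φ x) : ℝ)) atTop
      (nhds (∫ x : Euc N, (inner ℝ (gradient w x) (gradient φ x) : ℝ)))

/-- A generalized ground state on `Ω` of the form `Q(u) = ∫ (|∇u|² - c V u²)`:
a positive weak solution of `-Δw = c V w` to which some null sequence converges
weakly in `H¹_loc`. -/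
def GroundStateOn (N : ℕ) (Ω : Set (Euc N)) (c : ℝ) (V w : Euc N → ℝ) : Prop :=
  (∀ x ∈ Ω, 0 < w x) ∧ WeakSolutionOn N Ω c V w ∧
    ∃ v : ℕ → Euc N → ℝ, NullSeqOn N Ω c V v ∧ ConvergesLocallyWeakly N v w

/-- The capacity of a set `K ⊆ ℝ^N`. -/
def capacity (N : ℕ) (K : Set (Euc N)) : ℝ :=
  sInf { r | ∃ u : Euc N → ℝ, ContDiff ℝ (⊤ : ℕ∞) u ∧ HasCompactSupport u ∧
      (∀ x ∈ K, 1 ≤ u x) ∧ r = dirichlet N u }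

/-- A set `Z ⊆ ℝ^N` has capacity zero if every compact subset has capacity zero. -/
def CapacityZero (N : ℕ) (Z : Set (Euc N)) : Prop :=
  ∀ K ⊆ Z, IsCompact K → capacity N K = 0

/-! Test the Rayleigh quotient with the tent `u(x) = max (1 - |x - x_M| / r) 0`. It is
`1/r`-Lipschitz and supported in `B(x_M, r)`, so `∫ |∇u|² ≤ ω r^(N-2)` with `ω = |B(0,1)|`,
while polar coordinates give `∫ u² = 2 ω r^N / ((N+1)(N+2))`. On the ball `m ≥ m(x_M)` and
`|x| ≤ r + |x_M|`, hence `Λ_m ≤ (N+1)(N+2)(r+|x_M|)² / (2 r² m(x_M))`, and the two hypotheses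
say exactly that this bound lies below `Λ_N / m(0)` and `Λ_N / m(∞)`. -/

open Module Set

def tent {E : Type*} [NormedAddCommGroup E] (c : E) (r : ℝ) (x : E) : ℝ :=
  max (1 - ‖x - c‖ / r) 0

section Tent

variable {E : Type*} [NormedAddCommGroup E] {c x : E} {r : ℝ}

@[simp] lemma tent_self : tent c r c = 1 := by simp [tent]

lemma tent_eq_zero_of_le (hr : 0 < r) (hx : r ≤ ‖x - c‖) : tent c r x = 0 :=
  max_eq_right (by rw [sub_nonpos, one_le_div hr]; exact hx)

lemma continuous_tent (c : E) (r : ℝ) : Continuous (tent c r) :=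
  (continuous_const.sub ((continuous_id.sub continuous_const).norm.div_const r)).max
    continuous_const

lemma abs_tent_sub_tent_le (hr : 0 ≤ r) (x y : E) :
    |tent c r x - tent c r y| ≤ r⁻¹ * ‖x - y‖ :=
  calc |tent c r x - tent c r y| ≤ |(1 - ‖x - c‖ / r) - (1 - ‖y - c‖ / r)| :=
        abs_max_sub_max_le_abs _ _ _
    _ = r⁻¹ * |‖y - c‖ - ‖x - c‖| := by
        rw [← abs_of_nonneg (inv_nonneg.2 hr), ← abs_mul]; congr 1; ring
    _ ≤ r⁻¹ * ‖x - y‖ := by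
        gcongr; simpa [norm_sub_rev y] using abs_norm_sub_norm_le (y - c) (x - c)

lemma tsupport_tent_subset (hr : 0 < r) : tsupport (tent c r) ⊆ closedBall c r := by
  refine closure_minimal (fun x hx => ?_) isClosed_closedBall
  by_contra h
  rw [mem_closedBall, dist_eq_norm, not_le] at h
  exact hx (tent_eq_zero_of_le hr h.le)

lemma hasCompactSupport_tent [ProperSpace E] (hr : 0 < r) : HasCompactSupport (tent c r) :=
  (isCompact_closedBall c r).of_isClosed_subset isClosed_closure (tsupport_tent_subset hr)

lemma mul_tent_sq_div_le {m : E → ℝ} (hr : 0 < r) (h0 : (0 : E) ∉ ball c r)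
    (hball : ∀ x ∈ ball c r, m c ≤ m x) (hmc : 0 ≤ m c) (x : E) :
    m c * tent c r x ^ 2 / (r + ‖c‖) ^ 2 ≤ m x * tent c r x ^ 2 / ‖x‖ ^ 2 := by
  by_cases hx : x ∈ ball c r
  · have hx0 : 0 < ‖x‖ := norm_pos_iff.2 fun h => h0 (h ▸ hx)
    have hxR : ‖x‖ ≤ r + ‖c‖ := by linarith [norm_lt_of_mem_ball hx]
    exact div_le_div₀ (mul_nonneg (hmc.trans (hball x hx)) (sq_nonneg _))
      (by gcongr; exact hball x hx) (by positivity) (by gcongr)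
  · rw [mem_ball, dist_eq_norm, not_lt] at hx
    simp [tent_eq_zero_of_le hr hx]

variable [NormedSpace ℝ E]

lemma norm_fderiv_tent_le (hr : 0 ≤ r) (x : E) : ‖fderiv ℝ (tent c r) x‖ ≤ r⁻¹ :=
  norm_fderiv_le_of_lip' ℝ (inv_nonneg.2 hr)
    (Eventually.of_forall fun y => abs_tent_sub_tent_le hr y x)

lemma norm_fderiv_tent_sq_le_indicator (hr : 0 < r) (x : E) :
    ‖fderiv ℝ (tent c r) x‖ ^ 2 ≤ (closedBall c r).indicator (fun _ => (r ^ 2)⁻¹) x := by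
  by_cases hx : x ∈ closedBall c r
  · rw [indicator_of_mem hx, ← inv_pow]
    exact pow_le_pow_left₀ (norm_nonneg _) (norm_fderiv_tent_le hr.le x) 2
  · have : fderiv ℝ (tent c r) x = 0 :=
      Function.notMem_support.1 fun h => hx (tsupport_tent_subset hr (support_fderiv_subset ℝ h))
    simp [this, indicator_of_notMem hx]

variable [MeasurableSpace E] [BorelSpace E] [FiniteDimensional ℝ E]
  (μ : Measure E) [μ.IsAddHaarMeasure]

lemma integrable_closedBall_indicator_const (c : E) (r a : ℝ) :
    Integrable ((closedBall c r).indicator fun _ => a) μ :=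
  (integrable_indicator_iff measurableSet_closedBall).2
    (integrableOn_const measure_closedBall_lt_top.ne)

lemma integrable_norm_fderiv_tent_sq (hr : 0 < r) :
    Integrable (fun x => ‖fderiv ℝ (tent c r) x‖ ^ 2) μ := by
  refine (integrable_closedBall_indicator_const μ c r (r ^ 2)⁻¹).mono'
    ((measurable_fderiv ℝ _).norm.pow_const 2).aestronglyMeasurable (ae_of_all _ fun x => ?_)
  rw [Real.norm_of_nonneg (sq_nonneg _)]
  exact norm_fderiv_tent_sq_le_indicator hr x

lemma integral_norm_fderiv_tent_sq_le (hr : 0 < r) :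
    ∫ x, ‖fderiv ℝ (tent c r) x‖ ^ 2 ∂μ ≤ r ^ finrank ℝ E * μ.real (ball 0 1) / r ^ 2 := by
  calc ∫ x, ‖fderiv ℝ (tent c r) x‖ ^ 2 ∂μ
      ≤ ∫ x, (closedBall c r).indicator (fun _ => (r ^ 2)⁻¹) x ∂μ :=
        integral_mono (integrable_norm_fderiv_tent_sq μ hr)
          (integrable_closedBall_indicator_const μ c r _)
          (norm_fderiv_tent_sq_le_indicator hr)
    _ = r ^ finrank ℝ E * μ.real (ball 0 1) / r ^ 2 := by
        rw [integral_indicator_const _ measurableSet_closedBall,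
          Measure.addHaar_real_closedBall μ c hr.le, smul_eq_mul, div_eq_inv_mul, mul_comm]

end Tent

lemma integral_Ioi_pow_mul_tent_sq {r : ℝ} (hr : 0 < r) (k : ℕ) :
    ∫ y in Ioi (0 : ℝ), y ^ k * max (1 - y / r) 0 ^ 2
      = 2 * r ^ (k + 1) / ((k + 1) * (k + 2) * (k + 3)) := by
  have hvanish : ∀ y ∈ Ioi (0 : ℝ) \ Ioc 0 r, y ^ k * max (1 - y / r) 0 ^ 2 = 0 := by
    rintro y ⟨hy0, hyr⟩
    have : r ≤ y := le_of_lt (not_le.1 fun h => hyr ⟨hy0, h⟩)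
    rw [max_eq_right (by rw [sub_nonpos, one_le_div hr]; exact this)]
    ring
  rw [setIntegral_eq_of_subset_of_forall_sdiff_eq_zero measurableSet_Ioi Ioc_subset_Ioi_self
    hvanish, ← intervalIntegral.integral_of_le hr.le]
  have hpoly : ∀ y ∈ uIcc 0 r, y ^ k * max (1 - y / r) 0 ^ 2
      = y ^ k - 2 / r * y ^ (k + 1) + 1 / r ^ 2 * y ^ (k + 2) := by
    intro y hy
    rw [uIcc_of_le hr.le] at hy
    rw [max_eq_left (by rw [sub_nonneg, div_le_one hr]; exact hy.2)]
    field_simp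
    ring
  have hint : ∀ j : ℕ, IntervalIntegrable (fun y : ℝ => y ^ j) volume 0 r :=
    fun j => intervalIntegral.intervalIntegrable_pow j
  rw [intervalIntegral.integral_congr hpoly,
    intervalIntegral.integral_add ((hint _).sub ((hint _).const_mul _)) ((hint _).const_mul _),
    intervalIntegral.integral_sub (hint _) ((hint _).const_mul _),
    intervalIntegral.integral_const_mul, intervalIntegral.integral_const_mul,
    integral_pow, integral_pow, integral_pow]
  push_cast
  field_simp
  ring

section TentIntegral

variable {E : Type*} [NormedAddCommGroup E] [NormedSpace ℝ E] [Nontrivial E]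
  [MeasurableSpace E] [BorelSpace E] [FiniteDimensional ℝ E] (μ : Measure E) [μ.IsAddHaarMeasure]

lemma integral_tent_sq (c : E) {r : ℝ} (hr : 0 < r) :
    ∫ x, tent c r x ^ 2 ∂μ = 2 * μ.real (ball 0 1) * r ^ finrank ℝ E
      / ((finrank ℝ E + 1) * (finrank ℝ E + 2)) := by
  obtain ⟨k, hk⟩ : ∃ k, finrank ℝ E = k + 1 :=
    Nat.exists_eq_succ_of_ne_zero finrank_pos.ne'
  simp only [tent]
  rw [integral_sub_right_eq_self (fun y => max (1 - ‖y‖ / r) 0 ^ 2) c,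
    integral_fun_norm_addHaar μ (fun t => max (1 - t / r) 0 ^ 2), hk, Nat.add_sub_cancel]
  simp only [smul_eq_mul, nsmul_eq_mul]
  rw [integral_Ioi_pow_mul_tent_sq hr k]
  push_cast
  field_simp
  ring

end TentIntegral

section WeightedTent

variable {E : Type*} [NormedAddCommGroup E] [NormedSpace ℝ E] [MeasurableSpace E] [BorelSpace E]
  [FiniteDimensional ℝ E] (μ : Measure E) [μ.IsAddHaarMeasure] {m : E → ℝ} {c : E} {r : ℝ}

lemma integrable_tent_sq (hr : 0 < r) : Integrable (fun x => tent c r x ^ 2) μ :=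
  ((continuous_tent c r).memLp_of_hasCompactSupport (p := 2)
    (hasCompactSupport_tent hr)).integrable_sq

lemma integrable_mul_tent_sq_div_norm_sq (hr : 0 < r) (h0 : (0 : E) ∉ closedBall c r)
    (hm : ContinuousOn m (closedBall c r)) :
    Integrable (fun x => m x * tent c r x ^ 2 / ‖x‖ ^ 2) μ := by
  have hsupp : Function.support (fun x => m x * tent c r x ^ 2 / ‖x‖ ^ 2) ⊆ closedBall c r :=
    fun x hx => tsupport_tent_subset hr (subset_closure fun h => hx (by simp [h]))
  rw [← integrableOn_iff_integrable_of_support_subset hsupp]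
  refine ContinuousOn.integrableOn_compact (isCompact_closedBall c r) ?_
  refine (hm.mul ((continuous_tent c r).pow 2).continuousOn).div
    (continuous_norm.pow 2).continuousOn fun x hx => ?_
  exact pow_ne_zero 2 (norm_ne_zero_iff.2 fun h => h0 (h ▸ hx))

lemma le_integral_mul_tent_sq_div_norm_sq (hr : 0 < r) (h0 : (0 : E) ∉ closedBall c r)
    (hm : ContinuousOn m (closedBall c r)) (hball : ∀ x ∈ ball c r, m c ≤ m x) (hmc : 0 ≤ m c) :
    m c / (r + ‖c‖) ^ 2 * ∫ x, tent c r x ^ 2 ∂μ ≤ ∫ x, m x * tent c r x ^ 2 / ‖x‖ ^ 2 ∂μ :=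
  calc m c / (r + ‖c‖) ^ 2 * ∫ x, tent c r x ^ 2 ∂μ
      = ∫ x, m c * tent c r x ^ 2 / (r + ‖c‖) ^ 2 ∂μ := by
        rw [← integral_const_mul]; congr 1; ext x; ring
    _ ≤ ∫ x, m x * tent c r x ^ 2 / ‖x‖ ^ 2 ∂μ :=
        integral_mono (((integrable_tent_sq μ hr).const_mul _).div_const _)
          (integrable_mul_tent_sq_div_norm_sq μ hr h0 hm)
          (mul_tent_sq_div_le hr (fun h => h0 (ball_subset_closedBall h)) hball hmc)

end WeightedTent

lemma norm_gradient_eq_norm_fderiv {F : Type*} [NormedAddCommGroup F] [InnerProductSpace ℝ F]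
    [CompleteSpace F] (f : F → ℝ) (x : F) : ‖gradient f x‖ = ‖fderiv ℝ f x‖ :=
  (InnerProductSpace.toDual ℝ F).symm.norm_map _

section Euclidean

variable {N : ℕ} {r : ℝ}

lemma memD12_tent (c : Euc N) (hr : 0 < r) : MemD12 N (tent c r) :=
  ⟨(continuous_tent c r).memLp_of_hasCompactSupport (hasCompactSupport_tent hr),
    by simpa only [norm_gradient_eq_norm_fderiv] using integrable_norm_fderiv_tent_sq volume hr⟩

lemma dirichlet_tent_le (c : Euc N) (hr : 0 < r) :
    dirichlet N (tent c r) ≤ r ^ N * volume.real (ball (0 : Euc N) 1) / r ^ 2 := by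
  simpa only [dirichlet, norm_gradient_eq_norm_fderiv, finrank_euclideanSpace_fin]
    using integral_norm_fderiv_tent_sq_le (c := c) volume hr

lemma Lambda_le_rayleigh {m u : Euc N → ℝ} (hu : MemD12 N u) (hu0 : u ≠ 0)
    (hH : 0 < hardyInt N m u) : Lambda N m ≤ dirichlet N u / hardyInt N m u := by
  refine csInf_le ⟨0, ?_⟩ ⟨u, hu, hu0, hH, rfl⟩
  rintro _ ⟨v, -, -, hv, rfl⟩
  exact div_nonneg (integral_nonneg fun x => sq_nonneg _) hv.le

lemma Lambda_le_of_le_on_ball {m : Euc N → ℝ} {c : Euc N} (hr : 0 < r)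
    (h0 : (0 : Euc N) ∉ closedBall c r) (hm : ContinuousOn m (closedBall c r))
    (hball : ∀ x ∈ ball c r, m c ≤ m x) (hmc : 0 < m c) :
    Lambda N m ≤ ((N : ℝ) + 1) * ((N : ℝ) + 2) * (r + ‖c‖) ^ 2 / (2 * r ^ 2 * m c) := by
  have : Nontrivial (Euc N) := nontrivial_of_ne c 0 fun h => h0 (h ▸ mem_closedBall_self hr.le)
  set ω := volume.real (ball (0 : Euc N) 1)
  have hω : 0 < ω :=
    ENNReal.toReal_pos (measure_ball_pos volume _ one_pos).ne' measure_ball_lt_top.ne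
  have hmass : ∫ x, tent c r x ^ 2 = 2 * ω * r ^ N / ((N + 1) * (N + 2)) := by
    simpa only [finrank_euclideanSpace_fin] using integral_tent_sq (volume : Measure (Euc N)) c hr
  have hH := le_integral_mul_tent_sq_div_norm_sq volume hr h0 hm hball hmc.le
  rw [hmass] at hH
  have hpos : 0 < m c / (r + ‖c‖) ^ 2 * (2 * ω * r ^ N / ((N + 1) * (N + 2))) := by
    have : 0 < r + ‖c‖ := by positivity
    positivity
  calc Lambda N m ≤ dirichlet N (tent c r) / hardyInt N m (tent c r) :=
        Lambda_le_rayleigh (memD12_tent c hr) (fun h => by simpa using congrFun h c)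
          (hpos.trans_le hH)
    _ ≤ (r ^ N * ω / r ^ 2) / (m c / (r + ‖c‖) ^ 2 * (2 * ω * r ^ N / ((N + 1) * (N + 2)))) :=
        div_le_div₀ (by positivity) (dirichlet_tent_le c hr) hpos hH
    _ = ((N : ℝ) + 1) * ((N : ℝ) + 2) * (r + ‖c‖) ^ 2 / (2 * r ^ 2 * m c) := by
        field_simp

end Euclidean

lemma hardyConst_nonneg (N : ℕ) : 0 ≤ hardyConst N := sq_nonneg _

lemma lt_hardyConst_mul_one_div {N : ℕ} {a M r R : ℝ} (ha : 0 < a) (hM : 0 < M) (hr : 0 < r)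
    (hR : 0 < R)
    (h : M / a < r ^ 2 * ((N : ℝ) - 2) ^ 2 / (2 * R ^ 2 * ((N : ℝ) + 1) * ((N : ℝ) + 2))) :
    ((N : ℝ) + 1) * ((N : ℝ) + 2) * R ^ 2 / (2 * r ^ 2 * a) < hardyConst N * (1 / M) := by
  rw [div_lt_div_iff₀ ha (by positivity)] at h
  rw [hardyConst, mul_one_div, div_lt_div_iff₀ (by positivity) hM]
  linarith

theorem statement6_general (N : ℕ) (m : Euc N → ℝ)
    (hm_cont : Continuous m) (hm0_pos : 0 < m 0)
    (minf : ℝ) (hminf_pos : 0 < minf)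
    (xM : Euc N) (r : ℝ) (hr : 0 < r)
    (hball : ∀ x ∈ ball xM r, m xM ≤ m x) (hxM_pos : 0 < m xM)
    (h0ball : (0 : Euc N) ∉ closure (ball xM r))
    (h1 : m 0 / m xM <
      r ^ 2 * ((N : ℝ) - 2) ^ 2 / (2 * (r + ‖xM‖) ^ 2 * ((N : ℝ) + 1) * ((N : ℝ) + 2)))
    (h2 : minf / m xM <
      r ^ 2 * ((N : ℝ) - 2) ^ 2 / (2 * (r + ‖xM‖) ^ 2 * ((N : ℝ) + 1) * ((N : ℝ) + 2))) :
    Lambda N m < hardyConst N * min (1 / m 0) (1 / minf) := by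
  rw [closure_ball xM hr.ne'] at h0ball
  have hR : 0 < r + ‖xM‖ := by positivity
  calc Lambda N m ≤ ((N : ℝ) + 1) * ((N : ℝ) + 2) * (r + ‖xM‖) ^ 2 / (2 * r ^ 2 * m xM) :=
        Lambda_le_of_le_on_ball hr h0ball hm_cont.continuousOn hball hxM_pos
    _ < hardyConst N * min (1 / m 0) (1 / minf) := by
        rw [mul_min_of_nonneg _ _ (hardyConst_nonneg N)]
        exact lt_min (lt_hardyConst_mul_one_div hxM_pos hm0_pos hr hR h1)
          (lt_hardyConst_mul_one_div hxM_pos hminf_pos hr hR h2)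

/-- Proposition 2.7: a sufficient condition on a local maximum of `m`
for the strict inequality `Λ_m < Λ_N · min(1/m(0), 1/m(∞))`. -/
theorem statement6 (N : ℕ) (hN : 3 ≤ N) (m : Euc N → ℝ)
    (hm_cont : Continuous m) (hm_bdd : ∃ C : ℝ, ∀ x, |m x| ≤ C)
    (hm_nonneg : ∀ x, 0 ≤ m x) (hm0_pos : 0 < m 0)
    (minf : ℝ) (hminf : Tendsto m (cocompact (Euc N)) (nhds minf)) (hminf_pos : 0 < minf)
    (xM : Euc N) (r : ℝ) (hr : 0 < r)
    (hball : ∀ x ∈ ball xM r, m xM ≤ m x) (hxM_pos : 0 < m xM)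
    (h0ball : (0 : Euc N) ∉ closure (ball xM r))
    (h1 : m 0 / m xM <
      r ^ 2 * ((N : ℝ) - 2) ^ 2 / (2 * (r + ‖xM‖) ^ 2 * ((N : ℝ) + 1) * ((N : ℝ) + 2)))
    (h2 : minf / m xM <
      r ^ 2 * ((N : ℝ) - 2) ^ 2 / (2 * (r + ‖xM‖) ^ 2 * ((N : ℝ) + 1) * ((N : ℝ) + 2))) :
    Lambda N m < hardyConst N * min (1 / m 0) (1 / minf) :=
  statement6_general N m hm_cont hm0_pos minf hminf_pos xM r hr hball hxM_pos h0ball h1 h2
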